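/- arXiv:math/9906134 — 4 statements merged into one kernel-verified Lean document; each statement's English description precedes it below -/
import Mathlib

section
/- Lehmer's polynomial L(x) = x^10 + x^9 − x^7 − x^6 − x^5 − x^4 − x^3 + x + 1 is irreducible over ℚ, and its complex roots consist of exactly one real root α₁ > 1, the real root 1/α₁ ∈ (0,1), and eight roots lying on the unit circle |z| = 1. In particular, α₁ is a Salem number of degree 10. -/
/-!
Modulo 2, Lehmer's polynomial `L` is the product of two irreducible quintics, and modulo 3 the
product of irreducible factors of degrees 2 and 8. A monic integer factor of `L` therefore has
degree in `{0, 5, 10} ∩ {0, 2, 8, 10}`, so `L` is irreducible over `ℤ`, hence over `ℚ` by Gauss's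
lemma.

`L` is palindromic: `L(z) = z⁵ q(z + z⁻¹)` with `q = y⁵ + y⁴ - 5y³ - 5y² + 4y + 3`. By sign
changes, `q` has four roots in `(-2, 2)` and one in `(2, 3)`, so `L` is the product of the five
quadratics `z² - r z + 1` over the roots `r` of `q`. For `|r| ≤ 2` both roots of such a quadratic
lie on the unit circle, and for `r > 2` they are a real pair `α, α⁻¹` with `α > 1`.
-/

open Polynomial

/-- Rabin's irreducibility test. -/
theorem Polynomial.Monic.irreducible_of_isCoprime_X_pow_card_pow_sub_X {k : Type*} [Field k]
    [Finite k] {f : k[X]} (hf : f.Monic) (hdeg : 0 < f.natDegree)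
    (h : ∀ n, 0 < n → 2 * n ≤ f.natDegree → IsCoprime f (X ^ Nat.card k ^ n - X)) :
    Irreducible f := by
  refine (hf.irreducible_iff_lt_natDegree_lt (hf.natDegree_pos.mp hdeg)).mpr
    fun q hq hqdeg hqf => ?_
  rw [Finset.mem_Ioc, Nat.le_div_iff_mul_le two_pos] at hqdeg
  obtain ⟨g, -, hg, hgq⟩ := exists_monic_irreducible_factor q
    (not_isUnit_of_natDegree_pos q hqdeg.1)
  have hgdeg := natDegree_le_of_dvd hgq hq.ne_zero
  have hg_dvd : g ∣ X ^ Nat.card k ^ g.natDegree - X :=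
    hg.natDegree_dvd_iff_dvd_X_pow_card_pow_sub_X.mp dvd_rfl
  exact hg.not_isUnit
    ((h g.natDegree hg.natDegree_pos (by omega)).isUnit_of_dvd' (hgq.trans hqf) hg_dvd)

section Field

variable {K : Type*} [Field K]

theorem Polynomial.natDegree_eq_zero_or_eq_of_dvd_irreducible {d P : K[X]}
    (hP : Irreducible P) (hd : d ∣ P) : d.natDegree = 0 ∨ d.natDegree = P.natDegree := by
  obtain ⟨e, rfl⟩ := hd
  rcases hP.isUnit_or_isUnit rfl with hu | hu
  · exact .inl (natDegree_eq_zero_of_isUnit hu)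
  · have hd0 : d ≠ 0 := left_ne_zero_of_mul hP.ne_zero
    exact .inr (by rw [natDegree_mul hd0 hu.ne_zero, natDegree_eq_zero_of_isUnit hu, add_zero])

theorem Polynomial.natDegree_of_dvd_mul_irreducible {d P Q : K[X]}
    (hP : Irreducible P) (hQ : Irreducible Q) (hd : d ∣ P * Q) :
    d.natDegree = 0 ∨ d.natDegree = P.natDegree ∨ d.natDegree = Q.natDegree ∨
      d.natDegree = P.natDegree + Q.natDegree := by
  obtain ⟨d₁, d₂, hd₁, hd₂, rfl⟩ := exists_dvd_and_dvd_of_dvd_mul hd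
  rw [natDegree_mul (ne_zero_of_dvd_ne_zero hP.ne_zero hd₁)
    (ne_zero_of_dvd_ne_zero hQ.ne_zero hd₂)]
  rcases natDegree_eq_zero_or_eq_of_dvd_irreducible hP hd₁ with h₁ | h₁ <;>
  rcases natDegree_eq_zero_or_eq_of_dvd_irreducible hQ hd₂ with h₂ | h₂ <;> omega

theorem Polynomial.Monic.natDegree_of_dvd_of_map_eq_mul {R : Type*} [CommRing R] (φ : R →+* K)
    {f g : R[X]} {P Q : K[X]} (hg : g.Monic) (hgf : g ∣ f) (hf : f.map φ = P * Q)
    (hP : Irreducible P) (hQ : Irreducible Q) :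
    g.natDegree = 0 ∨ g.natDegree = P.natDegree ∨ g.natDegree = Q.natDegree ∨
      g.natDegree = P.natDegree + Q.natDegree := by
  rw [← hg.natDegree_map φ]
  exact natDegree_of_dvd_mul_irreducible hP hQ (hf ▸ map_dvd φ hgf)

theorem Polynomial.eq_prod_X_sq_sub_C_mul_X_add_one [Infinite K] {p : K[X]} {s : Multiset K}
    (hp : ∀ z ≠ 0, p.eval z = z ^ s.card * (s.map fun r => z + z⁻¹ - r).prod) :
    p = (s.map fun r => X ^ 2 - C r * X + 1).prod := by
  refine eq_of_infinite_eval_eq _ _ ((Set.finite_singleton 0).infinite_compl.mono ?_)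
  intro z (hz : z ≠ 0)
  rw [Set.mem_ofPred_eq, hp z hz, eval_multiset_prod, Multiset.map_map]
  clear hp
  induction s using Multiset.induction_on with
  | empty => simp
  | cons r s ih =>
    have hr : z * (z + z⁻¹ - r) = z ^ 2 - r * z + 1 := by field_simp; ring
    rw [Multiset.card_cons, Multiset.map_cons, Multiset.map_cons, Multiset.prod_cons,
      Multiset.prod_cons, ← ih, Function.comp_apply]
    simp only [eval_add, eval_sub, eval_mul, eval_pow, eval_X, eval_C, eval_one, ← hr]
    ring

theorem Polynomial.X_sq_sub_C_mul_X_add_one_eq {a : K} (ha : a ≠ 0) :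
    (X ^ 2 - C (a + a⁻¹) * X + 1 : K[X]) = (X - C a) * (X - C a⁻¹) := by
  rw [show (1 : K[X]) = C a * C a⁻¹ by rw [← C_mul, mul_inv_cancel₀ ha, C_1], C_add]
  ring

end Field

theorem Polynomial.prod_multiset_X_sub_C_of_nodup {R : Type*} [CommRing R] [IsDomain R]
    {p : R[X]} {s : Multiset R} (hp : p.Monic) (hs : s.Nodup) (hcard : p.natDegree ≤ s.card)
    (hroots : ∀ x ∈ s, p.IsRoot x) : (s.map fun a => X - C a).prod = p := by
  have hroots_eq : p.roots = s :=
    roots_eq_of_natDegree_le_card_of_ne_zero (S := ⟨s, hs⟩) hroots hcard hp.ne_zero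
  rw [← hroots_eq]
  exact prod_multiset_X_sub_C_of_monic_of_roots_card_eq hp
    (le_antisymm (card_roots' p) (hroots_eq ▸ hcard))

theorem Polynomial.exists_isRoot_mem_Ioo_of_eval_mul_eval_neg {p : ℝ[X]} {a b : ℝ} (hab : a ≤ b)
    (h : p.eval a * p.eval b < 0) : ∃ r ∈ Set.Ioo a b, p.IsRoot r := by
  have hp := p.continuous.continuousOn (s := Set.Icc a b)
  rcases mul_neg_iff.mp h with ⟨ha, hb⟩ | ⟨ha, hb⟩
  · exact intermediate_value_Ioo' hab hp ⟨hb, ha⟩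
  · exact intermediate_value_Ioo hab hp ⟨ha, hb⟩

theorem exists_one_lt_add_inv_eq {r : ℝ} (hr : 2 < r) : ∃ a : ℝ, 1 < a ∧ a + a⁻¹ = r := by
  have hs := Real.sq_sqrt (show 0 ≤ r ^ 2 - 4 by nlinarith)
  have hs0 := Real.sqrt_nonneg (r ^ 2 - 4)
  refine ⟨(r + √(r ^ 2 - 4)) / 2, by linarith, ?_⟩
  have hpos : 0 < r + √(r ^ 2 - 4) := by linarith
  field_simp
  linear_combination hs

theorem exists_norm_eq_one_add_inv_eq {r : ℝ} (hr : |r| ≤ 2) :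
    ∃ u : ℂ, ‖u‖ = 1 ∧ u + u⁻¹ = r := by
  refine ⟨Complex.exp (Real.arccos (r / 2) * Complex.I), Complex.norm_exp_ofReal_mul_I _, ?_⟩
  rw [← Complex.exp_neg, ← neg_mul, ← Complex.two_cos, ← Complex.ofReal_cos,
    Real.cos_arccos (by linarith [neg_abs_le r]) (by linarith [le_abs_self r])]
  push_cast
  ring

theorem norm_eq_one_of_isRoot_X_sq_sub_C_mul_X_add_one {r : ℝ} (hr : |r| ≤ 2) {z : ℂ}
    (hz : (X ^ 2 - C (r : ℂ) * X + 1).IsRoot z) : ‖z‖ = 1 := by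
  obtain ⟨u, hu, hur⟩ := exists_norm_eq_one_add_inv_eq hr
  have hu0 : u ≠ 0 := norm_ne_zero_iff.mp (by rw [hu]; exact one_ne_zero)
  rw [← hur, X_sq_sub_C_mul_X_add_one_eq hu0, IsRoot, eval_mul, mul_eq_zero] at hz
  simp only [eval_sub, eval_X, eval_C, sub_eq_zero] at hz
  rcases hz with rfl | rfl
  · exact hu
  · rw [norm_inv, hu, inv_one]

noncomputable def lehmerPoly (R : Type*) [CommRing R] : R[X] :=
  X ^ 10 + X ^ 9 - X ^ 7 - X ^ 6 - X ^ 5 - X ^ 4 - X ^ 3 + X + 1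

noncomputable def lehmerTrace (R : Type*) [CommRing R] : R[X] :=
  X ^ 5 + X ^ 4 - 5 * X ^ 3 - 5 * X ^ 2 + 4 * X + 3

section Lehmer

variable (R : Type*) [CommRing R]

theorem map_lehmerPoly {S : Type*} [CommRing S] (f : R →+* S) :
    (lehmerPoly R).map f = lehmerPoly S := by
  simp [lehmerPoly]

theorem map_lehmerTrace {S : Type*} [CommRing S] (f : R →+* S) :
    (lehmerTrace R).map f = lehmerTrace S := by
  simp [lehmerTrace]

theorem monic_lehmerPoly : (lehmerPoly R).Monic := by
  unfold lehmerPoly; monicity!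

theorem monic_lehmerTrace : (lehmerTrace R).Monic := by
  unfold lehmerTrace; monicity!

variable [Nontrivial R]

theorem natDegree_lehmerPoly : (lehmerPoly R).natDegree = 10 := by
  unfold lehmerPoly; compute_degree!

theorem natDegree_lehmerTrace : (lehmerTrace R).natDegree = 5 := by
  unfold lehmerTrace; compute_degree!

end Lehmer

theorem lehmerPoly_eval_eq {K : Type*} [Field K] {z : K} (hz : z ≠ 0) :
    (lehmerPoly K).eval z = z ^ 5 * (lehmerTrace K).eval (z + z⁻¹) := by
  simp only [lehmerPoly, lehmerTrace, eval_add, eval_sub, eval_mul, eval_pow, eval_X, eval_one,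
    eval_ofNat]
  field_simp
  ring

/- Each `IsCoprime` witness below is a Bézout pair computed by the extended Euclidean algorithm. -/

theorem lehmerPoly_zmod_two_eq_mul : ∃ P Q : (ZMod 2)[X], Irreducible P ∧ Irreducible Q ∧
    P.natDegree = 5 ∧ Q.natDegree = 5 ∧ lehmerPoly (ZMod 2) = P * Q := by
  have hP : (X ^ 5 + X ^ 4 + X ^ 3 + X ^ 2 + 1 : (ZMod 2)[X]).natDegree = 5 := by compute_degree!
  have hQ : (X ^ 5 + X ^ 3 + X ^ 2 + X + 1 : (ZMod 2)[X]).natDegree = 5 := by compute_degree!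
  refine ⟨_, _, ?_, ?_, hP, hQ, by unfold lehmerPoly; ring_nf; reduce_mod_char⟩
  · refine Monic.irreducible_of_isCoprime_X_pow_card_pow_sub_X (by monicity!) (by omega) ?_
    rw [Nat.card_zmod, hP]
    intro n hn₀ hn
    obtain rfl | rfl : n = 1 ∨ n = 2 := by omega
    · exact ⟨1, X + X ^ 3, by ring_nf; reduce_mod_char⟩
    · exact ⟨1 + X ^ 2 + X ^ 3, X ^ 4, by ring_nf; reduce_mod_char⟩
  · refine Monic.irreducible_of_isCoprime_X_pow_card_pow_sub_X (by monicity!) (by omega) ?_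
    rw [Nat.card_zmod, hQ]
    intro n hn₀ hn
    obtain rfl | rfl : n = 1 ∨ n = 2 := by omega
    · exact ⟨1, 1 + X ^ 2 + X ^ 3, by ring_nf; reduce_mod_char⟩
    · exact ⟨1 + X ^ 2 + X ^ 3, 1 + X ^ 2 + X ^ 3 + X ^ 4, by ring_nf; reduce_mod_char⟩

set_option maxHeartbeats 1000000 in
set_option maxRecDepth 4000 in
theorem irreducible_octic_zmod_three :
    Irreducible (X ^ 8 + X ^ 7 + 2 * X ^ 6 + X ^ 5 + X ^ 3 + 2 * X ^ 2 + X + 1 : (ZMod 3)[X]) := by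
  have hdeg : (X ^ 8 + X ^ 7 + 2 * X ^ 6 + X ^ 5 + X ^ 3 + 2 * X ^ 2 + X + 1 :
      (ZMod 3)[X]).natDegree = 8 := by compute_degree!
  refine Monic.irreducible_of_isCoprime_X_pow_card_pow_sub_X (by monicity!) (by omega) ?_
  rw [Nat.card_zmod, hdeg]
  intro n hn₀ hn
  obtain rfl | rfl | rfl | rfl : n = 1 ∨ n = 2 ∨ n = 3 ∨ n = 4 := by omega
  · exact ⟨1 + X + 2 * X ^ 2, 2 + 2 * X + X ^ 2 + X ^ 3 + X ^ 4 + X ^ 5 + X ^ 7,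
      by ring_nf; reduce_mod_char⟩
  · exact ⟨1 + X + 2 * X ^ 2 + X ^ 3 + X ^ 5 + 2 * X ^ 6 + X ^ 7 + X ^ 8,
      2 + 2 * X + X ^ 5 + X ^ 6 + 2 * X ^ 7, by ring_nf; reduce_mod_char⟩
  · exact ⟨1 + X ^ 2 + 2 * X ^ 5 + 2 * X ^ 6 + 2 * X ^ 7 + X ^ 8 + X ^ 9 + X ^ 10 + 2 * X ^ 11 +
      2 * X ^ 12 + 2 * X ^ 13 + X ^ 16 + X ^ 18 + 2 * X ^ 19 + X ^ 20 + X ^ 24 + 2 * X ^ 25,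
      1 + 2 * X ^ 2 + 2 * X ^ 3 + X ^ 4 + X ^ 6, by ring_nf; reduce_mod_char⟩
  · exact ⟨1 + X + X ^ 4 + X ^ 5 + X ^ 6 + X ^ 8 + 2 * X ^ 9 + 2 * X ^ 10 + X ^ 11 + X ^ 12 +
      X ^ 13 + 2 * X ^ 15 + X ^ 16 + 2 * X ^ 18 + 2 * X ^ 19 + 2 * X ^ 20 + X ^ 21 + X ^ 22 +
      2 * X ^ 23 + 2 * X ^ 25 + 2 * X ^ 26 + 2 * X ^ 27 + 2 * X ^ 30 + 2 * X ^ 31 + X ^ 32 +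
      X ^ 34 + X ^ 36 + X ^ 38 + X ^ 40 + 2 * X ^ 41 + 2 * X ^ 42 + 2 * X ^ 45 + 2 * X ^ 46 +
      2 * X ^ 47 + 2 * X ^ 49 + X ^ 50 + X ^ 51 + 2 * X ^ 52 + 2 * X ^ 53 + 2 * X ^ 54 + X ^ 56 +
      2 * X ^ 57 + X ^ 59 + X ^ 60 + X ^ 61 + 2 * X ^ 62 + 2 * X ^ 63 + X ^ 64 + X ^ 66 + X ^ 67 +
      X ^ 68 + X ^ 71 + X ^ 72 + 2 * X ^ 73 + 2 * X ^ 75 + 2 * X ^ 77 + 2 * X ^ 79,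
      2 + 2 * X ^ 3 + X ^ 5 + X ^ 6, by ring_nf; reduce_mod_char⟩

theorem lehmerPoly_zmod_three_eq_mul : ∃ P Q : (ZMod 3)[X], Irreducible P ∧ Irreducible Q ∧
    P.natDegree = 2 ∧ Q.natDegree = 8 ∧ lehmerPoly (ZMod 3) = P * Q := by
  have hP : (X ^ 2 + 1 : (ZMod 3)[X]).natDegree = 2 := by compute_degree!
  refine ⟨_, _, ?_, irreducible_octic_zmod_three, hP, by compute_degree!, ?_⟩
  · refine Monic.irreducible_of_isCoprime_X_pow_card_pow_sub_X (by monicity!) (by omega) ?_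
    rw [Nat.card_zmod, hP]
    intro n hn₀ hn
    obtain rfl : n = 1 := by omega
    exact ⟨1 + X ^ 2, 2 * X, by ring_nf; reduce_mod_char⟩
  · unfold lehmerPoly; ring_nf; reduce_mod_char; ring

theorem irreducible_lehmerPoly_int : Irreducible (lehmerPoly ℤ) := by
  refine (monic_lehmerPoly ℤ).irreducible_iff_natDegree'.mpr
    ⟨(monic_lehmerPoly ℤ).natDegree_pos.mp (by rw [natDegree_lehmerPoly]; norm_num),
      fun f g _ hg hfg => ?_⟩
  obtain ⟨P₂, Q₂, hP₂, hQ₂, hP₂deg, hQ₂deg, h₂⟩ := lehmerPoly_zmod_two_eq_mul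
  obtain ⟨P₃, Q₃, hP₃, hQ₃, hP₃deg, hQ₃deg, h₃⟩ := lehmerPoly_zmod_three_eq_mul
  have hgL : g ∣ lehmerPoly ℤ := Dvd.intro_left f hfg
  have mod₂ := hg.natDegree_of_dvd_of_map_eq_mul (Int.castRingHom _) hgL
    ((map_lehmerPoly _ _).trans h₂) hP₂ hQ₂
  have mod₃ := hg.natDegree_of_dvd_of_map_eq_mul (Int.castRingHom _) hgL
    ((map_lehmerPoly _ _).trans h₃) hP₃ hQ₃
  rw [natDegree_lehmerPoly, Finset.mem_Ioc]
  omega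

theorem lehmerTrace_eq_prod : ∃ (r₅ : ℝ) (R : Multiset ℝ), 2 < r₅ ∧ (∀ r ∈ R, |r| ≤ 2) ∧
    lehmerTrace ℝ = ((r₅ ::ₘ R).map fun r => X - C r).prod := by
  have sign_change (a b : ℝ) (hab : a ≤ b)
      (h : (lehmerTrace ℝ).eval a * (lehmerTrace ℝ).eval b < 0) :=
    exists_isRoot_mem_Ioo_of_eval_mul_eval_neg hab h
  obtain ⟨r₁, ⟨h₁, h₁'⟩, hr₁⟩ := sign_change (-2) (-3/2) (by norm_num) (by norm_num [lehmerTrace])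
  obtain ⟨r₂, ⟨h₂, h₂'⟩, hr₂⟩ := sign_change (-3/2) (-1) (by norm_num) (by norm_num [lehmerTrace])
  obtain ⟨r₃, ⟨h₃, h₃'⟩, hr₃⟩ := sign_change (-1) 0 (by norm_num) (by norm_num [lehmerTrace])
  obtain ⟨r₄, ⟨h₄, h₄'⟩, hr₄⟩ := sign_change 0 1 (by norm_num) (by norm_num [lehmerTrace])
  obtain ⟨r₅, ⟨h₅, h₅'⟩, hr₅⟩ := sign_change 2 3 (by norm_num) (by norm_num [lehmerTrace])
  refine ⟨r₅, {r₁, r₂, r₃, r₄}, h₅, ?_,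
    (prod_multiset_X_sub_C_of_nodup (monic_lehmerTrace ℝ) ?_ ?_ ?_).symm⟩
  · simp only [Multiset.insert_eq_cons, Multiset.mem_cons, Multiset.mem_singleton, abs_le]
    grind
  · simp only [Multiset.insert_eq_cons, Multiset.nodup_cons, Multiset.mem_cons,
      Multiset.mem_singleton, Multiset.nodup_singleton]
    grind
  · simp [natDegree_lehmerTrace]
  · simp only [Multiset.insert_eq_cons, Multiset.mem_cons, Multiset.mem_singleton]
    grind

theorem roots_lehmerPoly : ∃ α : ℝ, 1 < α ∧ ∃ s : Multiset ℂ, Multiset.card s = 8 ∧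
    (∀ z ∈ s, ‖z‖ = 1) ∧ (lehmerPoly ℂ).roots = (α : ℂ) ::ₘ ((α⁻¹ : ℝ) : ℂ) ::ₘ s := by
  obtain ⟨r₅, R, h₅, hR, htrace⟩ := lehmerTrace_eq_prod
  obtain ⟨α, hα, rfl⟩ := exists_one_lt_add_inv_eq h₅
  set P : ℂ[X] := (R.map fun r : ℝ => X ^ 2 - C (r : ℂ) * X + 1).prod
  have hα0 : (α : ℂ) ≠ 0 := by exact_mod_cast (zero_lt_one.trans hα).ne'
  have hfactor : lehmerPoly ℂ = (X - C (α : ℂ)) * (X - C (α : ℂ)⁻¹) * P := by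
    have hcard : R.card + 1 = 5 := by
      rw [← Multiset.card_cons (α + α⁻¹) R, ← natDegree_multiset_prod_X_sub_C_eq_card, ← htrace,
        natDegree_lehmerTrace]
    have := eq_prod_X_sq_sub_C_mul_X_add_one (p := lehmerPoly ℂ)
      (s := ((α + α⁻¹) ::ₘ R).map (fun r : ℝ => (r : ℂ))) fun z hz => by
        rw [lehmerPoly_eval_eq hz, ← map_lehmerTrace _ Complex.ofRealHom, htrace]
        simp [Polynomial.map_multiset_prod, eval_multiset_prod, Multiset.map_map, hcard]
    rwa [Multiset.map_cons, Multiset.map_cons, Multiset.prod_cons, Multiset.map_map,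
      Complex.ofReal_add, Complex.ofReal_inv, X_sq_sub_C_mul_X_add_one_eq hα0] at this
  have hL0 : (X - C (α : ℂ)) * (X - C (α : ℂ)⁻¹) * P ≠ 0 :=
    hfactor ▸ (monic_lehmerPoly ℂ).ne_zero
  have hroots : (lehmerPoly ℂ).roots = (α : ℂ) ::ₘ ((α⁻¹ : ℝ) : ℂ) ::ₘ P.roots := by
    rw [hfactor, roots_mul hL0, roots_mul (left_ne_zero_of_mul hL0), roots_X_sub_C,
      roots_X_sub_C]
    simp
  refine ⟨α, hα, P.roots, ?_, ?_, hroots⟩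
  · have := congrArg Multiset.card hroots
    rw [IsAlgClosed.card_roots_eq_natDegree, natDegree_lehmerPoly] at this
    simp only [Multiset.card_cons] at this
    omega
  · intro z hz
    rw [mem_roots (right_ne_zero_of_mul hL0), IsRoot, eval_multiset_prod,
      Multiset.prod_eq_zero_iff, Multiset.mem_map] at hz
    obtain ⟨_, hq, hz⟩ := hz
    obtain ⟨r, hr, rfl⟩ := Multiset.mem_map.mp hq
    exact norm_eq_one_of_isRoot_X_sq_sub_C_mul_X_add_one (hR r hr) hz

/-- Lehmer's polynomial is irreducible over `ℚ`, and its complex roots consist of exactly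
one real root `α₁ > 1`, the real root `1/α₁ ∈ (0,1)`, and eight roots on the unit circle.
In particular `α₁` is a Salem number of degree 10. -/
theorem lehmer_is_salem :
    Irreducible (X^10 + X^9 - X^7 - X^6 - X^5 - X^4 - X^3 + X + 1 : Polynomial ℚ) ∧
    ∃ α : ℝ, 1 < α ∧ 0 < α⁻¹ ∧ α⁻¹ < 1 ∧
      ∃ s : Multiset ℂ, Multiset.card s = 8 ∧ (∀ z ∈ s, ‖z‖ = 1) ∧
        (X^10 + X^9 - X^7 - X^6 - X^5 - X^4 - X^3 + X + 1 : Polynomial ℂ).roots =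
          (α : ℂ) ::ₘ ((α⁻¹ : ℝ) : ℂ) ::ₘ s := by
  refine ⟨?_, ?_⟩
  · have h := (monic_lehmerPoly ℤ).irreducible_iff_irreducible_map_fraction_map (K := ℚ) |>.mp
      irreducible_lehmerPoly_int
    rwa [map_lehmerPoly] at h
  · obtain ⟨α, hα, s, hcard, hnorm, hroots⟩ := roots_lehmerPoly
    exact ⟨α, hα, inv_pos.mpr (by linarith), inv_lt_one_of_one_lt₀ hα, s, hcard, hnorm, hroots⟩
end

section
/- Let α₁ > 1 be the unique real root greater than 1 of Lehmer's polynomial x^10 + x^9 − x^7 − x^6 − x^5 − x^4 − x^3 + x + 1. Then the largest eigenvalue of the adjacency matrix of the tree T_{2,3,7} equals α₁^{1/2} + α₁^{−1/2}. -/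
def armAdj (p q i j : ℕ) : Prop :=
  (i = 0 ∧ (j = 1 ∨ j = p + 1 ∨ j = p + q + 1)) ∨
  (j = 0 ∧ (i = 1 ∨ i = p + 1 ∨ i = p + q + 1)) ∨
  (i + 1 = j ∧ i ≠ 0 ∧ j ≠ p + 1 ∧ j ≠ p + q + 1) ∨
  (j + 1 = i ∧ j ≠ 0 ∧ i ≠ p + 1 ∧ i ≠ p + q + 1)

instance (p q i j : ℕ) : Decidable (armAdj p q i j) := by
  unfold armAdj; infer_instance

def treeMatrix (p q r : ℕ) : Matrix (Fin (1 + p + q + r)) (Fin (1 + p + q + r)) ℝ :=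
  Matrix.of fun i j => if armAdj p q (i : ℕ) (j : ℕ) then 1 else 0

/-- Perron-type bound: a nonnegative matrix with a strictly positive eigenvector with
eigenvalue `l` has all real eigenvalues at most `l`. -/
lemma perron_bound {n : ℕ} (A : Matrix (Fin n) (Fin n) ℝ) (hA : ∀ i j, 0 ≤ A i j)
    (w : Fin n → ℝ) (hw : ∀ i, 0 < w i) (l : ℝ) (hAw : A.mulVec w = l • w)
    {μ : ℝ} {v : Fin n → ℝ} (hv : v ≠ 0) (hAv : A.mulVec v = μ • v) : μ ≤ l := by
  obtain ⟨j0, hj0⟩ : ∃ j, v j ≠ 0 := by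
    by_contra h; push_neg at h; exact hv (funext h)
  have hne : (Finset.univ : Finset (Fin n)).Nonempty := ⟨j0, Finset.mem_univ _⟩
  obtain ⟨i0, -, hi0⟩ := Finset.exists_max_image Finset.univ (fun i => |v i| / w i) hne
  set c := |v i0| / w i0 with hc
  have hcw : c * w i0 = |v i0| := div_mul_cancel₀ _ (ne_of_gt (hw i0))
  have hcpos : 0 < c := lt_of_lt_of_le (div_pos (abs_pos.mpr hj0) (hw j0))
    (hi0 j0 (Finset.mem_univ _))
  have hle : ∀ j, |v j| ≤ c * w j := by
    intro j
    have h1 := hi0 j (Finset.mem_univ _)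
    have h2 : |v j| / w j * w j ≤ c * w j :=
      mul_le_mul_of_nonneg_right h1 (le_of_lt (hw j))
    rwa [div_mul_cancel₀ _ (ne_of_gt (hw j))] at h2
  have hmv : A.mulVec v i0 = ∑ j, A i0 j * v j := rfl
  have hmw : A.mulVec w i0 = ∑ j, A i0 j * w j := rfl
  have key : |μ| * |v i0| ≤ l * |v i0| := by
    have h1 : |μ| * |v i0| = |A.mulVec v i0| := by rw [hAv]; simp [abs_mul]
    have h2 : |A.mulVec v i0| ≤ ∑ j, A i0 j * |v j| := by
      rw [hmv]
      refine le_trans (Finset.abs_sum_le_sum_abs _ _) ?_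
      refine Finset.sum_le_sum fun j _ => ?_
      rw [abs_mul, abs_of_nonneg (hA i0 j)]
    have h3 : ∑ j, A i0 j * |v j| ≤ ∑ j, A i0 j * (c * w j) :=
      Finset.sum_le_sum fun j _ => mul_le_mul_of_nonneg_left (hle j) (hA i0 j)
    have h4 : ∑ j, A i0 j * (c * w j) = c * A.mulVec w i0 := by
      rw [hmw, Finset.mul_sum]; congr 1; funext j; ring
    have h5 : c * A.mulVec w i0 = l * (c * w i0) := by rw [hAw]; simp; ring
    calc |μ| * |v i0| = |A.mulVec v i0| := h1
    _ ≤ ∑ j, A i0 j * |v j| := h2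
    _ ≤ ∑ j, A i0 j * (c * w j) := h3
    _ = c * A.mulVec w i0 := h4
    _ = l * (c * w i0) := h5
    _ = l * |v i0| := by rw [hcw]
  have hv0 : 0 < |v i0| := by rw [← hcw]; exact mul_pos hcpos (hw i0)
  calc μ ≤ |μ| := le_abs_self μ
  _ ≤ l := le_of_mul_le_mul_right key hv0

lemma keyaux (t s : ℝ) (hst : t * s = 1)
    (hL : t^20 + t^18 - t^14 - t^12 - t^10 - t^8 - t^6 + t^2 + 1 = 0) :
    (t+s)^10 - 9*(t+s)^8 + 27*(t+s)^6 - 31*(t+s)^4 + 12*(t+s)^2 - 1 = 0 := by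
  linear_combination s^10 * hL + ((1) + (-12)*s^2 + (31)*s^4 + (-27)*s^6 + (9)*s^8 + (-23)*t*s + (112)*t*s^3 + (-131)*t*s^5 + (45)*t*s^7 + (-1)*t*s^9 + (-12)*t^2 + (163)*t^2*s^2 + (-293)*t^2*s^4 + (121)*t^2*s^6 + (112)*t^3*s + (-377)*t^3*s^3 + (211)*t^3*s^5 + (1)*t^3*s^7 + (31)*t^4 + (-293)*t^4*s^2 + (253)*t^4*s^4 + (1)*t^4*s^6 + (1)*t^4*s^8 + (-131)*t^5*s + (211)*t^5*s^3 + (1)*t^5*s^5 + (1)*t^5*s^7 + (1)*t^5*s^9 + (-27)*t^6 + (121)*t^6*s^2 + (1)*t^6*s^4 + (1)*t^6*s^6 + (1)*t^6*s^8 + (45)*t^7*s + (1)*t^7*s^3 + (1)*t^7*s^5 + (1)*t^7*s^7 + (1)*t^7*s^9 + (9)*t^8 + (1)*t^8*s^4 + (1)*t^8*s^6 + (1)*t^8*s^8 + (-1)*t^9*s + (1)*t^9*s^5 + (1)*t^9*s^7 + (1)*t^9*s^9 + (-1)*t^10 + (-1)*t^10*s^2 + (1)*t^10*s^6 + (1)*t^10*s^8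 + (-1)*t^11*s + (-1)*t^11*s^3 + (1)*t^11*s^7 + (1)*t^11*s^9 + (-1)*t^12*s^2 + (-1)*t^12*s^4 + (1)*t^12*s^8 + (-1)*t^13*s^3 + (-1)*t^13*s^5 + (1)*t^13*s^9 + (-1)*t^14*s^4 + (-1)*t^14*s^6 + (-1)*t^15*s^5 + (-1)*t^15*s^7 + (-1)*t^16*s^6 + (-1)*t^16*s^8 + (-1)*t^17*s^7 + (-1)*t^17*s^9 + (-1)*t^18*s^8 + (-1)*t^19*s^9) * hst

/-- If `α₁ > 1` is the real root greater than 1 of Lehmer's polynomial, then the largest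
eigenvalue of the adjacency matrix of the tree `T_{2,3,7}` equals `α₁^{1/2} + α₁^{-1/2}`. -/
theorem T237_largest_eigenvalue (α : ℝ) (hα1 : 1 < α)
    (hα : α^10 + α^9 - α^7 - α^6 - α^5 - α^4 - α^3 + α + 1 = 0) :
    IsGreatest {μ : ℝ | ∃ v : Fin (1 + 1 + 2 + 6) → ℝ, v ≠ 0 ∧
        (treeMatrix 1 2 6).mulVec v = μ • v}
      (Real.sqrt α + (Real.sqrt α)⁻¹) := by
  have ht1 : 1 < Real.sqrt α := by
    rw [show (1:ℝ) = Real.sqrt 1 by simp]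
    exact Real.sqrt_lt_sqrt (by norm_num) hα1
  have ht0 : (0:ℝ) < Real.sqrt α := lt_trans zero_lt_one ht1
  have htne : Real.sqrt α ≠ 0 := ne_of_gt ht0
  have ht2 : Real.sqrt α ^ 2 = α := Real.sq_sqrt (le_of_lt (lt_trans zero_lt_one hα1))
  set t : ℝ := Real.sqrt α with htdef
  set l : ℝ := t + t⁻¹ with hldef
  have hst : t * t⁻¹ = 1 := mul_inv_cancel₀ htne
  have hl2 : 2 < l := by
    rw [hldef, show t + t⁻¹ = 2 + (t-1)^2 * t⁻¹ by field_simp; ring]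
    have : 0 < (t-1)^2 * t⁻¹ := mul_pos (pow_pos (by linarith) 2) (inv_pos.mpr ht0)
    linarith
  have hl0 : (0:ℝ) < l := by linarith
  have hq : 4 < l^2 := by nlinarith
  have hl21 : (0:ℝ) < l^2 - 1 := by nlinarith
  have key : l^10 - 9*l^8 + 27*l^6 - 31*l^4 + 12*l^2 - 1 = 0 := by
    have hL : t^20 + t^18 - t^14 - t^12 - t^10 - t^8 - t^6 + t^2 + 1 = 0 := by
      have h := hα
      rw [← ht2] at h
      linear_combination h
    have := keyaux t t⁻¹ hst hL
    rw [hldef]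
    linear_combination this
  have hc0 : 0 < l^6 - 5*l^4 + 6*l^2 - 1 := by
    have h1 : 0 < (l^2-4)*(l^4 - l^2 + 2) := mul_pos (by linarith) (by nlinarith)
    nlinarith
  have hw4 : 0 < l^5 - 4*l^3 + 3*l := by
    have : l^5 - 4*l^3 + 3*l = l*(l^2-1)*(l^2-3) := by ring
    rw [this]; exact mul_pos (mul_pos hl0 hl21) (by linarith)
  have hw5 : 0 < l^4 - 3*l^2 + 1 := by
    have h1 : 0 < (l^2-4)*(l^2+1) := mul_pos (by linarith) (by positivity)
    nlinarith
  have hw6 : 0 < l^3 - 2*l := by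
    have : l^3 - 2*l = l*(l^2-2) := by ring
    rw [this]; exact mul_pos hl0 (by linarith)
  have hll : 0 < l*(l^2-1) := mul_pos hl0 hl21
  set c0 : ℝ := l^6 - 5*l^4 + 6*l^2 - 1 with hc0def
  set W : Fin (1+1+2+6) → ℝ :=
    ![l*(l^2-1)*c0, (l^2-1)*c0, l^2*c0, l*c0,
      l*(l^2-1)*(l^5 - 4*l^3 + 3*l), l*(l^2-1)*(l^4 - 3*l^2 + 1),
      l*(l^2-1)*(l^3 - 2*l), l*(l^2-1)*(l^2 - 1), l*(l^2-1)*l, l*(l^2-1)] with hWdef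
  have hw : ∀ i, 0 < W i := by
    intro i
    fin_cases i
    · exact mul_pos hll hc0
    · exact mul_pos hl21 hc0
    · exact mul_pos (by positivity) hc0
    · exact mul_pos hl0 hc0
    · exact mul_pos hll hw4
    · exact mul_pos hll hw5
    · exact mul_pos hll hw6
    · exact mul_pos hll hl21
    · exact mul_pos hll hl0
    · exact hll
  have hAW : (treeMatrix 1 2 6).mulVec W = l • W := by
    funext i
    fin_cases i <;>
      · simp only [treeMatrix, Matrix.mulVec, dotProduct, Fin.sum_univ_succ,
          Finset.univ_unique, Finset.sum_singleton, Matrix.of_apply, armAdj,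
          show ((0:Fin (1+1+2+6)):ℕ) = 0 from rfl, show ((1:Fin (1+1+2+6)):ℕ) = 1 from rfl,
          show ((2:Fin (1+1+2+6)):ℕ) = 2 from rfl, show ((3:Fin (1+1+2+6)):ℕ) = 3 from rfl,
          show ((4:Fin (1+1+2+6)):ℕ) = 4 from rfl, show ((5:Fin (1+1+2+6)):ℕ) = 5 from rfl,
          show ((6:Fin (1+1+2+6)):ℕ) = 6 from rfl, show ((7:Fin (1+1+2+6)):ℕ) = 7 from rfl,
          show ((8:Fin (1+1+2+6)):ℕ) = 8 from rfl, show ((9:Fin (1+1+2+6)):ℕ) = 9 from rfl]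
        norm_num [hWdef, Fin.succ, Pi.smul_apply, smul_eq_mul]
        try ring
        try linear_combination key * (-1)
  constructor
  · exact ⟨W, by
      intro h
      have h9 : l * (l^2 - 1) = 0 := congrFun h 9
      exact (ne_of_gt hll) h9, hAW⟩
  · rintro μ ⟨v, hv, hAv⟩
    exact perron_bound _ (fun i j => by
        dsimp [treeMatrix]; split <;> norm_num) W hw l hAW hv hAv
end

section
/- For every integer m ≥ 1, the polynomial x^{m+10} − x^{m+8} − x^{m+7} + x^3 + x^2 − 1 has a unique real root α_m > 1, and the largest eigenvalue of the adjacency matrix of the tree T_{2,3,6+m} equals α_m^{1/2} + α_m^{−1/2}. -/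
/-
For `x > 1` put `σ k = x ^ k - x⁻¹ ^ k` (`powSubInvPow x k`), so that `σ 0 = 0` and
`(x + x⁻¹) σ (k + 1) = σ (k + 2) + σ k`. On each arm of `T_{p+1,q+1,r+1}` take `σ (k + 1)` at
distance `k` from the leaf, times the values `σ (L + 1)` of the other two arms at the centre: this
positive vector satisfies the eigen-equation for `x + x⁻¹` everywhere except possibly at the
centre, where it is one polynomial condition. For `(p, q, r) = (1, 2, 5 + m)` that condition is
`(x² - 1)² F(x²) = 0`, where `F = t23Poly m` is the polynomial of the theorem. A nonnegative
symmetric matrix with a positive eigenvector for `a` has all its eigenvalues `b` with `|b| ≤ a`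
(pair `|w|` against `v`), so every root `α > 1` of `F` gives the largest eigenvalue
`√α + √α⁻¹`; as `x ↦ x + x⁻¹` is injective on `[1, ∞)`, there is at most one such root. One
exists because `F α = (α - 1) G α` with `G 1 = -m < 0 < G 2`.
-/

open Finset Matrix

theorem abs_le_of_mulVec_eq_smul_of_pos {ι : Type*} [Fintype ι] {A : Matrix ι ι ℝ}
    (hA : A.IsSymm) (hA₀ : ∀ i j, 0 ≤ A i j) {v w : ι → ℝ} {a b : ℝ} (hv : ∀ i, 0 < v i)
    (hav : A *ᵥ v = a • v) (hw : w ≠ 0) (hbw : A *ᵥ w = b • w) : |b| ≤ a := by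
  have habs : |b| • |w| ≤ A *ᵥ |w| := fun i => by
    calc |b| * |w i| = |∑ j, A i j * w j| := by
          rw [← abs_mul, ← smul_eq_mul, ← Pi.smul_apply, ← hbw]; rfl
      _ ≤ ∑ j, |A i j * w j| := abs_sum_le_sum_abs _ _
      _ = (A *ᵥ |w|) i := by simp [mulVec, dotProduct, abs_mul, abs_of_nonneg (hA₀ _ _)]
  have hpos : 0 < v ⬝ᵥ |w| := by
    obtain ⟨i, hi⟩ := Function.ne_iff.mp hw
    exact sum_pos' (fun j _ => mul_nonneg (hv j).le (abs_nonneg _))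
      ⟨i, mem_univ _, mul_pos (hv i) (abs_pos.mpr hi)⟩
  have : |b| * (v ⬝ᵥ |w|) ≤ a * (v ⬝ᵥ |w|) :=
    calc |b| * (v ⬝ᵥ |w|) = v ⬝ᵥ (|b| • |w|) := by rw [dotProduct_smul, smul_eq_mul]
      _ ≤ v ⬝ᵥ (A *ᵥ |w|) := dotProduct_le_dotProduct_of_nonneg_left habs fun i => (hv i).le
      _ = a * (v ⬝ᵥ |w|) := by
        rw [dotProduct_mulVec, ← mulVec_transpose, hA.eq, hav, smul_dotProduct, smul_eq_mul]
  exact le_of_mul_le_mul_right this hpos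

theorem isGreatest_eigenvalue_of_pos_eigenvector {ι : Type*} [Fintype ι] [Nonempty ι]
    {A : Matrix ι ι ℝ} (hA : A.IsSymm) (hA₀ : ∀ i j, 0 ≤ A i j) {v : ι → ℝ} {a : ℝ}
    (hv : ∀ i, 0 < v i) (hav : A *ᵥ v = a • v) :
    IsGreatest {μ : ℝ | ∃ w : ι → ℝ, w ≠ 0 ∧ A *ᵥ w = μ • w} a :=
  ⟨⟨v, fun h => (hv (Classical.arbitrary ι)).ne' (congrFun h _), hav⟩,
    fun _ ⟨_, hw, hbw⟩ =>
      (le_abs_self _).trans (abs_le_of_mulVec_eq_smul_of_pos hA hA₀ hv hav hw hbw)⟩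

theorem add_inv_injOn : Set.InjOn (fun x : ℝ => x + x⁻¹) (Set.Ici 1) := by
  intro u (hu : 1 ≤ u) v (hv : 1 ≤ v) (h : u + u⁻¹ = v + v⁻¹)
  have : (u - v) * (u * v - 1) = 0 := by
    field_simp at h
    linear_combination h
  rcases mul_eq_zero.mp this with h | h <;> nlinarith

noncomputable def powSubInvPow (x : ℝ) (k : ℕ) : ℝ := x ^ k - x⁻¹ ^ k

section PowSubInvPow

variable {x : ℝ}

@[simp] theorem powSubInvPow_zero (x : ℝ) : powSubInvPow x 0 = 0 := by simp [powSubInvPow]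

theorem powSubInvPow_pos (hx : 1 < x) {k : ℕ} (hk : k ≠ 0) : 0 < powSubInvPow x k :=
  sub_pos.mpr <|
    (pow_lt_one₀ (by positivity) (inv_lt_one_of_one_lt₀ hx) hk).trans (one_lt_pow₀ hx hk)

theorem add_inv_mul_powSubInvPow (hx : x ≠ 0) (k : ℕ) :
    (x + x⁻¹) * powSubInvPow x (k + 1) = powSubInvPow x (k + 2) + powSubInvPow x k := by
  unfold powSubInvPow
  linear_combination (x ^ k - x⁻¹ ^ k) * mul_inv_cancel₀ hx

theorem powSubInvPow_eq_div (hx : x ≠ 0) (k : ℕ) :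
    powSubInvPow x k = ((x ^ 2) ^ k - 1) / x ^ k := by
  rw [powSubInvPow, inv_pow, eq_div_iff (pow_ne_zero k hx)]
  field_simp
  ring

end PowSubInvPow

section Tree

variable {p q r : ℕ}

theorem armAdj_comm (p q i j : ℕ) : armAdj p q i j ↔ armAdj p q j i := by
  unfold armAdj; tauto

theorem treeMatrix_isSymm (p q r : ℕ) : (treeMatrix p q r).IsSymm :=
  IsSymm.ext fun i j => by simp only [treeMatrix, of_apply, armAdj_comm p q j]

theorem treeMatrix_nonneg (p q r : ℕ) (i j : Fin (1 + p + q + r)) : 0 ≤ treeMatrix p q r i j := by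
  simp only [treeMatrix, of_apply]; split_ifs <;> norm_num

theorem treeMatrix_mulVec_apply (p q r : ℕ) (f : ℕ → ℝ) (i : Fin (1 + p + q + r)) :
    (treeMatrix p q r *ᵥ fun j => f j) i =
      ∑ j ∈ (range (1 + p + q + r)).filter (armAdj p q i), f j := by
  simp only [mulVec, dotProduct, treeMatrix, of_apply, ite_mul, one_mul, zero_mul]
  rw [sum_filter, Fin.sum_univ_eq_sum_range (fun j => if armAdj p q i j then f j else 0)]

theorem filter_armAdj_zero (hp : 1 ≤ p) (hq : 1 ≤ q) (hr : 1 ≤ r) :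
    (range (1 + p + q + r)).filter (armAdj p q 0) = {1, p + 1, p + q + 1} := by
  ext j; simp only [mem_filter, mem_range, mem_insert, mem_singleton, armAdj, true_and]; omega

/-- The labels `a + 1, …, a + L` form one of the three arms, `a + 1` next to the centre. -/
def IsArm (p q r a L : ℕ) : Prop := a = 0 ∧ L = p ∨ a = p ∧ L = q ∨ a = p + q ∧ L = r

/-- The neighbour of `i` towards the centre, for `i` on the arm starting at `a + 1`. -/
def armPrev (a i : ℕ) : ℕ := if i = a + 1 then 0 else i - 1

theorem filter_armAdj_of_isArm {a L i : ℕ} (hp : 1 ≤ p) (harm : IsArm p q r a L)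
    (hai : a < i) (hiL : i ≤ a + L) :
    (range (1 + p + q + r)).filter (armAdj p q i) =
      if i < a + L then {armPrev a i, i + 1} else {armPrev a i} := by
  unfold IsArm at harm
  ext j
  split_ifs <;> simp only [mem_filter, mem_range, mem_insert, mem_singleton, armAdj, armPrev] <;>
    split_ifs <;> omega

/-- The factor contributed by the arm with labels `a + 1, …, a + L`: `powSubInvPow x (k + 1)` at
distance `k` from its leaf, and off the arm its value `powSubInvPow x (L + 1)` at the centre. -/
noncomputable def armFactor (x : ℝ) (a L i : ℕ) : ℝ :=
  if a < i ∧ i ≤ a + L then powSubInvPow x (a + L + 1 - i) else powSubInvPow x (L + 1)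

noncomputable def treeVec (x : ℝ) (p q r i : ℕ) : ℝ :=
  armFactor x 0 p i * armFactor x p q i * armFactor x (p + q) r i

/-- The eigen-equation of `treeVec x p q r` for `x + x⁻¹` at the centre. -/
def CentreCondition (x : ℝ) (p q r : ℕ) : Prop :=
  powSubInvPow x p * powSubInvPow x (q + 1) * powSubInvPow x (r + 1)
      + powSubInvPow x (p + 1) * powSubInvPow x q * powSubInvPow x (r + 1)
      + powSubInvPow x (p + 1) * powSubInvPow x (q + 1) * powSubInvPow x r
    = (x + x⁻¹) * (powSubInvPow x (p + 1) * powSubInvPow x (q + 1) * powSubInvPow x (r + 1))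

variable {x : ℝ}

theorem armFactor_pos (hx : 1 < x) (a L i : ℕ) : 0 < armFactor x a L i := by
  unfold armFactor; split_ifs <;> exact powSubInvPow_pos hx (by omega)

theorem treeVec_pos (hx : 1 < x) (p q r i : ℕ) : 0 < treeVec x p q r i :=
  mul_pos (mul_pos (armFactor_pos hx _ _ _) (armFactor_pos hx _ _ _)) (armFactor_pos hx _ _ _)

theorem armFactor_armPrev_add (hx : x ≠ 0) {a L i : ℕ} (hai : a < i) (hiL : i ≤ a + L) :
    armFactor x a L (armPrev a i) + (if i < a + L then armFactor x a L (i + 1) else 0) =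
      (x + x⁻¹) * armFactor x a L i := by
  obtain ⟨k, hk⟩ : ∃ k, a + L = i + k := ⟨a + L - i, by omega⟩
  have hprev : armFactor x a L (armPrev a i) = powSubInvPow x (k + 2) := by
    unfold armFactor armPrev; split_ifs <;> congr 1 <;> omega
  have hi : armFactor x a L i = powSubInvPow x (k + 1) := by
    unfold armFactor; rw [if_pos ⟨hai, hiL⟩]; congr 1; omega
  have hnext : (if i < a + L then armFactor x a L (i + 1) else 0) = powSubInvPow x k := by
    unfold armFactor
    split_ifs <;> first | omega | (congr 1; omega) | (rw [show k = 0 by omega]; simp)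
  rw [hprev, hi, hnext, add_inv_mul_powSubInvPow hx]

theorem treeVec_eq_mul_armFactor (x : ℝ) {a L : ℕ} (harm : IsArm p q r a L) :
    ∃ c, ∀ j, (j = 0 ∨ a < j ∧ j ≤ a + L) → treeVec x p q r j = c * armFactor x a L j := by
  rcases harm with ⟨ha, hL⟩ | ⟨ha, hL⟩ | ⟨ha, hL⟩ <;> subst a L
  · refine ⟨powSubInvPow x (q + 1) * powSubInvPow x (r + 1), fun j hj => ?_⟩
    unfold treeVec armFactor; split_ifs <;> first | omega | ring
  · refine ⟨powSubInvPow x (p + 1) * powSubInvPow x (r + 1), fun j hj => ?_⟩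
    unfold treeVec armFactor; split_ifs <;> first | omega | ring
  · refine ⟨powSubInvPow x (p + 1) * powSubInvPow x (q + 1), fun j hj => ?_⟩
    unfold treeVec armFactor; split_ifs <;> first | omega | ring

theorem sum_filter_armAdj_treeVec_of_isArm (hx : x ≠ 0) (hp : 1 ≤ p) {a L i : ℕ}
    (harm : IsArm p q r a L) (hai : a < i) (hiL : i ≤ a + L) :
    ∑ j ∈ (range (1 + p + q + r)).filter (armAdj p q i), treeVec x p q r j =
      (x + x⁻¹) * treeVec x p q r i := by
  obtain ⟨c, hc⟩ := treeVec_eq_mul_armFactor x harm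
  have hprev := hc (armPrev a i) (by unfold armPrev; split_ifs <;> omega)
  rw [filter_armAdj_of_isArm hp harm hai hiL, hc i (Or.inr ⟨hai, hiL⟩), mul_left_comm,
    ← armFactor_armPrev_add hx hai hiL]
  split_ifs with hlt
  · rw [sum_pair (by unfold armPrev; split_ifs <;> omega), hprev,
      hc (i + 1) (Or.inr ⟨by omega, hlt⟩), mul_add]
  · rw [sum_singleton, hprev, add_zero]

theorem sum_filter_armAdj_treeVec_zero (hp : 1 ≤ p) (hq : 1 ≤ q) (hr : 1 ≤ r)
    (hcentre : CentreCondition x p q r) :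
    ∑ j ∈ (range (1 + p + q + r)).filter (armAdj p q 0), treeVec x p q r j =
      (x + x⁻¹) * treeVec x p q r 0 := by
  rw [filter_armAdj_zero hp hq hr, sum_insert (by simp only [mem_insert, mem_singleton]; omega),
    sum_pair (by omega)]
  simp (disch := omega) only [treeVec, armFactor, if_pos, if_neg]
  rw [show 0 + p + 1 - 1 = p by omega, show p + q + 1 - (p + 1) = q by omega,
    show p + q + r + 1 - (p + q + 1) = r by omega, ← hcentre, add_assoc]

theorem treeMatrix_mulVec_treeVec (hx : x ≠ 0) (hp : 1 ≤ p) (hq : 1 ≤ q) (hr : 1 ≤ r)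
    (hcentre : CentreCondition x p q r) :
    treeMatrix p q r *ᵥ (fun i : Fin (1 + p + q + r) => treeVec x p q r i) =
      (x + x⁻¹) • fun i : Fin (1 + p + q + r) => treeVec x p q r i := by
  ext i
  have hi := i.isLt
  rw [treeMatrix_mulVec_apply, Pi.smul_apply, smul_eq_mul]
  by_cases h0 : (i : ℕ) = 0
  · rw [h0]; exact sum_filter_armAdj_treeVec_zero hp hq hr hcentre
  by_cases h1 : (i : ℕ) ≤ p
  · exact sum_filter_armAdj_treeVec_of_isArm hx hp (Or.inl ⟨rfl, rfl⟩) (by omega) (by omega)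
  by_cases h2 : (i : ℕ) ≤ p + q
  · exact sum_filter_armAdj_treeVec_of_isArm hx hp (Or.inr (Or.inl ⟨rfl, rfl⟩)) (by omega) h2
  · exact sum_filter_armAdj_treeVec_of_isArm hx hp (Or.inr (Or.inr ⟨rfl, rfl⟩)) (by omega)
      (by omega)

end Tree

def t23Poly (m : ℕ) (α : ℝ) : ℝ := α ^ (m + 10) - α ^ (m + 8) - α ^ (m + 7) + α ^ 3 + α ^ 2 - 1

theorem t23Poly_eq_sub_one_mul (m : ℕ) (α : ℝ) :
    t23Poly m α =
      (α - 1) * (2 * α ^ 2 + 3 * α + 2 + (∑ i ∈ range (m + 7), α ^ i) * (α ^ 3 - α - 1)) := by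
  unfold t23Poly
  linear_combination -(α ^ 3 - α - 1) * geom_sum_mul α (m + 7)

theorem exists_one_lt_t23Poly_eq_zero {m : ℕ} (hm : 1 ≤ m) : ∃ α, 1 < α ∧ t23Poly m α = 0 := by
  set G : ℝ → ℝ := fun α =>
    2 * α ^ 2 + 3 * α + 2 + (∑ i ∈ range (m + 7), α ^ i) * (α ^ 3 - α - 1)
  have hG1 : G 1 < 0 := by
    simp only [G]; norm_num; exact_mod_cast hm
  have hG2 : 0 < G 2 := by simp only [G]; positivity
  obtain ⟨α, ⟨h1, -⟩, hα⟩ := intermediate_value_Icc (by norm_num : (1 : ℝ) ≤ 2)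
    (by fun_prop : Continuous G).continuousOn ⟨hG1.le, hG2.le⟩
  have hne : α ≠ 1 := by rintro rfl; exact hG1.ne hα
  exact ⟨α, lt_of_le_of_ne h1 hne.symm, by
    rw [t23Poly_eq_sub_one_mul]; exact mul_eq_zero_of_right _ hα⟩

theorem centreCondition_of_t23Poly_eq_zero {m : ℕ} {x : ℝ} (hx : x ≠ 0)
    (hf : t23Poly m (x ^ 2) = 0) : CentreCondition x 1 2 (5 + m) := by
  unfold CentreCondition
  unfold t23Poly at hf
  simp only [show 5 + m = m + 5 by ring, Nat.reduceAdd, powSubInvPow_eq_div hx]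
  field_simp
  -- without denominators the sides differ by `x ^ (m + 5) (x ^ 2 - 1) ^ 2 t23Poly m (x ^ 2)`
  linear_combination -x ^ (m + 5) * (x ^ 2 - 1) ^ 2 * hf

/-- For every integer `m ≥ 1`, the polynomial
`x^{m+10} - x^{m+8} - x^{m+7} + x^3 + x^2 - 1` has a unique real root `α_m > 1`,
and the largest eigenvalue of the adjacency matrix of the tree `T_{2,3,6+m}`
equals `α_m^{1/2} + α_m^{-1/2}`. -/
theorem T23m_largest_eigenvalue (m : ℕ) (hm : 1 ≤ m) :
    (∃! α : ℝ, 1 < α ∧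
        α^(m+10) - α^(m+8) - α^(m+7) + α^3 + α^2 - 1 = 0) ∧
    ∀ α : ℝ, 1 < α → α^(m+10) - α^(m+8) - α^(m+7) + α^3 + α^2 - 1 = 0 →
      IsGreatest {μ : ℝ | ∃ v : Fin (1 + 1 + 2 + (5 + m)) → ℝ, v ≠ 0 ∧
          (treeMatrix 1 2 (5 + m)).mulVec v = μ • v}
        (Real.sqrt α + (Real.sqrt α)⁻¹) := by
  have hgreatest : ∀ α : ℝ, 1 < α → t23Poly m α = 0 →
      IsGreatest {μ : ℝ | ∃ v : Fin (1 + 1 + 2 + (5 + m)) → ℝ, v ≠ 0 ∧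
          treeMatrix 1 2 (5 + m) *ᵥ v = μ • v} (√α + (√α)⁻¹) := by
    intro α hα hroot
    have hx : 1 < √α := Real.sqrt_one ▸ Real.sqrt_lt_sqrt zero_le_one hα
    rw [← Real.sq_sqrt (zero_le_one.trans hα.le)] at hroot
    exact isGreatest_eigenvalue_of_pos_eigenvector (treeMatrix_isSymm _ _ _)
      (treeMatrix_nonneg _ _ _) (fun i => treeVec_pos hx _ _ _ i)
      (treeMatrix_mulVec_treeVec (by positivity) le_rfl one_le_two (by omega)
        (centreCondition_of_t23Poly_eq_zero (by positivity) hroot))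
  obtain ⟨α₀, hα₀, hroot₀⟩ := exists_one_lt_t23Poly_eq_zero hm
  refine ⟨⟨α₀, ⟨hα₀, hroot₀⟩, fun β ⟨hβ, hrootβ⟩ => ?_⟩, hgreatest⟩
  have hsqrt := add_inv_injOn (Real.one_le_sqrt.2 hβ.le) (Real.one_le_sqrt.2 hα₀.le)
    ((hgreatest β hβ hrootβ).unique (hgreatest α₀ hα₀ hroot₀))
  exact (Real.sqrt_inj (by linarith) (by linarith)).1 hsqrt
end

section
/- The characteristic polynomial of the adjacency matrix of the tree T_{2,3,10} (on 13 vertices) equals (λ^4 − 4λ^2 + 2) times the characteristic polynomial of the adjacency matrix of the tree T_{2,4,5} (on 10 vertices). In particular, the trees T_{2,3,10} and T_{2,4,5} have the same largest adjacency eigenvalue. -/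
open Polynomial

noncomputable def myM (p q n : ℕ) : Matrix (Fin n) (Fin n) (Polynomial ℝ) :=
  Matrix.of fun i j => if (i : ℕ) = (j : ℕ) then X else if armAdj p q (i : ℕ) (j : ℕ) then -1 else 0

lemma charpoly_eq_myM (p q r : ℕ) :
    (treeMatrix p q r).charpoly = (myM p q (1+p+q+r)).det := by
  have hno : ∀ i : ℕ, ¬ armAdj p q i i := by intro i; unfold armAdj; omega
  unfold Matrix.charpoly
  congr 1
  ext i j
  by_cases h : i = j
  · subst h
    rw [Matrix.charmatrix_apply_eq]
    simp [treeMatrix, myM, hno]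
  · rw [Matrix.charmatrix_apply_ne _ _ _ h]
    have hv : ¬ ((i : ℕ) = (j : ℕ)) := by simpa [Fin.val_eq_val] using h
    by_cases ha : armAdj p q (i : ℕ) (j : ℕ) <;>
      simp [treeMatrix, myM, ha, hv]

lemma det_peel {n : ℕ} (M : Matrix (Fin (n+2)) (Fin (n+2)) (Polynomial ℝ))
    (h1 : ∀ j : Fin (n+2), (j : ℕ) < n → M (Fin.last (n+1)) j = 0)
    (h2 : ∀ i : Fin (n+2), (i : ℕ) < n → M i (Fin.last (n+1)) = 0) :
    M.det = M (Fin.last (n+1)) (Fin.last (n+1)) * (M.submatrix Fin.castSucc Fin.castSucc).det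
      - M (Fin.last (n+1)) ((Fin.last n).castSucc) * M ((Fin.last n).castSucc) (Fin.last (n+1)) *
        (M.submatrix (fun i : Fin n => i.castSucc.castSucc) (fun j : Fin n => j.castSucc.castSucc)).det := by
  rw [Matrix.det_succ_row M (Fin.last (n+1)), Fin.sum_univ_castSucc, Fin.sum_univ_castSucc]
  have key : ∀ j : Fin n, M (Fin.last (n+1)) (j.castSucc.castSucc) = 0 := fun j =>
    h1 _ (by simpa using j.isLt)
  simp only [key, mul_zero, zero_mul, Finset.sum_const_zero, zero_add, Fin.succAbove_last,
    Fin.val_last, Fin.coe_castSucc]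
  have s1 : ((-1 : Polynomial ℝ))^((n+1)+n) = -1 := Odd.neg_one_pow ⟨n, by ring⟩
  have s2 : ((-1 : Polynomial ℝ))^((n+1)+(n+1)) = 1 := Even.neg_one_pow ⟨n+1, by ring⟩
  have hN : (M.submatrix Fin.castSucc ((Fin.last n).castSucc).succAbove).det
      = M ((Fin.last n).castSucc) (Fin.last (n+1)) *
        (M.submatrix (fun i : Fin n => i.castSucc.castSucc) (fun j : Fin n => j.castSucc.castSucc)).det := by
    rw [Matrix.det_succ_column _ (Fin.last n), Fin.sum_univ_castSucc]
    have key2 : ∀ i : Fin n,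
        (M.submatrix Fin.castSucc ((Fin.last n).castSucc).succAbove) i.castSucc (Fin.last n) = 0 := by
      intro i
      simp only [Matrix.submatrix_apply, Fin.succAbove_castSucc_self, Fin.succ_last]
      exact h2 _ (by simpa using i.isLt)
    simp only [key2, mul_zero, zero_mul, Finset.sum_const_zero, zero_add, Fin.succAbove_last,
      Fin.val_last]
    have s3 : ((-1 : Polynomial ℝ))^(n+n) = 1 := Even.neg_one_pow ⟨n, by ring⟩
    rw [s3]
    have hsub : (M.submatrix Fin.castSucc ((Fin.last n).castSucc).succAbove).submatrix
        Fin.castSucc Fin.castSucc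
        = M.submatrix (fun i : Fin n => i.castSucc.castSucc) (fun j : Fin n => j.castSucc.castSucc) := by
      ext i j
      simp only [Matrix.submatrix_apply, Matrix.submatrix_submatrix, Function.comp_apply]
      rw [Fin.succAbove_castSucc_of_lt _ _ (Fin.castSucc_lt_last j)]
    rw [hsub]
    simp only [Matrix.submatrix_apply, Fin.succAbove_castSucc_self, Fin.succ_last]
    ring
  rw [hN, s1, s2]
  ring
lemma myM_succ (p q n : ℕ) (h : p + q + 1 ≤ n) :
    (myM p q (n+2)).det = X * (myM p q (n+1)).det - (myM p q n).det := by
  have h1 : ∀ j : Fin (n+2), (j : ℕ) < n → myM p q (n+2) (Fin.last (n+1)) j = 0 := by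
    intro j hj
    simp only [myM, Matrix.of_apply, Fin.val_last]
    rw [if_neg (by omega), if_neg (by unfold armAdj; omega)]
  have h2 : ∀ i : Fin (n+2), (i : ℕ) < n → myM p q (n+2) i (Fin.last (n+1)) = 0 := by
    intro i hi
    simp only [myM, Matrix.of_apply, Fin.val_last]
    rw [if_neg (by omega), if_neg (by unfold armAdj; omega)]
  rw [det_peel _ h1 h2]
  have e1 : (myM p q (n+2)).submatrix Fin.castSucc Fin.castSucc = myM p q (n+1) := by
    ext i j; simp [myM]
  have e2 : (myM p q (n+2)).submatrix (fun i : Fin n => i.castSucc.castSucc)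
      (fun j : Fin n => j.castSucc.castSucc) = myM p q n := by
    ext i j; simp [myM]
  rw [e1, e2]
  have v1 : myM p q (n+2) (Fin.last (n+1)) (Fin.last (n+1)) = X := by
    simp [myM]
  have v2 : myM p q (n+2) (Fin.last (n+1)) ((Fin.last n).castSucc) = -1 := by
    simp only [myM, Matrix.of_apply, Fin.val_last, Fin.coe_castSucc]
    rw [if_neg (by omega), if_pos (by unfold armAdj; omega)]
  have v3 : myM p q (n+2) ((Fin.last n).castSucc) (Fin.last (n+1)) = -1 := by
    simp only [myM, Matrix.of_apply, Fin.val_last, Fin.coe_castSucc]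
    rw [if_neg (by omega), if_pos (by unfold armAdj; omega)]
  rw [v1, v2, v3]
  ring
lemma b1 : (myM 1 2 4).det = X^4 - 3*X^2 + 1 := by
  have hm : myM 1 2 4 = !![X,-1,-1,0; -1,X,0,0; -1,0,X,-1; 0,0,-1,X] := by
    ext i j; fin_cases i <;> fin_cases j <;> norm_num [myM, armAdj]
  rw [hm]
  simp [Matrix.det_succ_row_zero, Fin.sum_univ_succ, Fin.succAbove, ]
  ring
lemma cons_val_castSucc' {α : Type*} {m : ℕ} (x : α) (u : Fin (m+1) → α) (i : Fin (m+1)) :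
    Matrix.vecCons x u i.castSucc = Matrix.vecCons x (fun j : Fin m => u j.castSucc) i := by
  induction i using Fin.cases with
  | zero => rfl
  | succ j => rw [← Fin.succ_castSucc, Matrix.cons_val_succ, Matrix.cons_val_succ]

lemma b2 : (myM 1 2 5).det = X^5 - 4*X^3 + 2*X := by
  have hm : myM 1 2 5 = !![X,-1,-1,0,-1; -1,X,0,0,0; -1,0,X,-1,0; 0,0,-1,X,0; -1,0,0,0,X] := by
    ext i j; fin_cases i <;> fin_cases j <;> norm_num [myM, armAdj]
  rw [hm]
  simp [Matrix.det_succ_row_zero, Fin.sum_univ_succ, cons_val_castSucc', Fin.succAbove, Fin.val_ofNat, Matrix.vecHead, Matrix.vecTail]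
  ring
lemma b3 : (myM 1 3 5).det = X^5 - 4*X^3 + 3*X := by
  have hm : myM 1 3 5 = !![X,-1,-1,0,0; -1,X,0,0,0; -1,0,X,-1,0; 0,0,-1,X,-1; 0,0,0,-1,X] := by
    ext i j; fin_cases i <;> fin_cases j <;> norm_num [myM, armAdj]
  rw [hm]
  simp [Matrix.det_succ_row_zero, Fin.sum_univ_succ, cons_val_castSucc', Fin.succAbove, Fin.val_ofNat, Matrix.vecHead, Matrix.vecTail]
  ring
set_option maxRecDepth 20000 in
set_option maxHeartbeats 3200000 in
lemma b4 : (myM 1 3 6).det = X^6 - 5*X^4 + 5*X^2 := by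
  have hm : myM 1 3 6 = !![X,-1,-1,0,0,-1; -1,X,0,0,0,0; -1,0,X,-1,0,0; 0,0,-1,X,-1,0; 0,0,0,-1,X,0; -1,0,0,0,0,X] := by
    ext i j; fin_cases i <;> fin_cases j <;> norm_num [myM, armAdj]
  rw [hm]
  simp [Matrix.det_succ_row_zero, Fin.sum_univ_succ, cons_val_castSucc', Fin.succAbove, Fin.val_ofNat, Matrix.vecHead, Matrix.vecTail]
  ring

lemma myM_succ' (p q n m k : ℕ) (h : p + q + 1 ≤ n) (hm : m = n + 1) (hk : k = n + 2) :
    (myM p q k).det = X * (myM p q m).det - (myM p q n).det := by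
  subst hm hk; exact myM_succ p q n h

lemma charpoly_eq_myM' (p q r k : ℕ) (hk : k = 1 + p + q + r) :
    (treeMatrix p q r).charpoly = (myM p q k).det := by
  subst hk; exact charpoly_eq_myM p q r

lemma d6 : (myM 1 2 6).det = X^6 - 5*X^4 + 5*X^2 - 1 := by
  rw [myM_succ' 1 2 4 5 6 (by norm_num) (by norm_num) (by norm_num), b2, b1]; ring

lemma d7 : (myM 1 2 7).det = X^7 - 6*X^5 + 9*X^3 - 3*X := by
  rw [myM_succ' 1 2 5 6 7 (by norm_num) (by norm_num) (by norm_num), d6, b2]; ring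

lemma d8 : (myM 1 2 8).det = X^8 - 7*X^6 + 14*X^4 - 8*X^2 + 1 := by
  rw [myM_succ' 1 2 6 7 8 (by norm_num) (by norm_num) (by norm_num), d7, d6]; ring

lemma d9 : (myM 1 2 9).det = X^9 - 8*X^7 + 20*X^5 - 17*X^3 + 4*X := by
  rw [myM_succ' 1 2 7 8 9 (by norm_num) (by norm_num) (by norm_num), d8, d7]; ring

lemma d10 : (myM 1 2 10).det = X^10 - 9*X^8 + 27*X^6 - 31*X^4 + 12*X^2 - 1 := by
  rw [myM_succ' 1 2 8 9 10 (by norm_num) (by norm_num) (by norm_num), d9, d8]; ring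

lemma d11 : (myM 1 2 11).det = X^11 - 10*X^9 + 35*X^7 - 51*X^5 + 29*X^3 - 5*X := by
  rw [myM_succ' 1 2 9 10 11 (by norm_num) (by norm_num) (by norm_num), d10, d9]; ring

lemma d12 : (myM 1 2 12).det = X^12 - 11*X^10 + 44*X^8 - 78*X^6 + 60*X^4 - 17*X^2 + 1 := by
  rw [myM_succ' 1 2 10 11 12 (by norm_num) (by norm_num) (by norm_num), d11, d10]; ring

lemma d13 : (myM 1 2 13).det = X^13 - 12*X^11 + 54*X^9 - 113*X^7 + 111*X^5 - 46*X^3 + 6*X := by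
  rw [myM_succ' 1 2 11 12 13 (by norm_num) (by norm_num) (by norm_num), d12, d11]; ring

lemma e7 : (myM 1 3 7).det = X^7 - 6*X^5 + 9*X^3 - 3*X := by
  rw [myM_succ' 1 3 5 6 7 (by norm_num) (by norm_num) (by norm_num), b4, b3]; ring

lemma e8 : (myM 1 3 8).det = X^8 - 7*X^6 + 14*X^4 - 8*X^2 := by
  rw [myM_succ' 1 3 6 7 8 (by norm_num) (by norm_num) (by norm_num), e7, b4]; ring

lemma e9 : (myM 1 3 9).det = X^9 - 8*X^7 + 20*X^5 - 17*X^3 + 3*X := by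
  rw [myM_succ' 1 3 7 8 9 (by norm_num) (by norm_num) (by norm_num), e8, e7]; ring

lemma eval_charpoly' {n : ℕ} (M : Matrix (Fin n) (Fin n) ℝ) (x : ℝ) :
    M.charpoly.eval x = (x • (1 : Matrix (Fin n) (Fin n) ℝ) - M).det := by
  have h := RingHom.map_det (Polynomial.evalRingHom x) (Matrix.charmatrix M)
  simp only [Polynomial.coe_evalRingHom] at h
  rw [Matrix.charpoly, h]
  congr 1
  ext i j
  by_cases hij : i = j
  · subst hij
    simp [RingHom.mapMatrix_apply, Matrix.map_apply, Matrix.charmatrix_apply_eq,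
      Matrix.sub_apply, Matrix.smul_apply, Matrix.one_apply_eq]
  · simp [RingHom.mapMatrix_apply, Matrix.map_apply, Matrix.charmatrix_apply_ne _ _ _ hij,
      Matrix.sub_apply, Matrix.smul_apply, Matrix.one_apply_ne hij]

lemma eig_iff {n : ℕ} (M : Matrix (Fin n) (Fin n) ℝ) (x : ℝ) :
    (∃ v : Fin n → ℝ, v ≠ 0 ∧ M.mulVec v = x • v) ↔ M.charpoly.IsRoot x := by
  have h1 : ∀ v : Fin n → ℝ, (M.mulVec v = x • v) ↔
      ((x • (1 : Matrix (Fin n) (Fin n) ℝ) - M).mulVec v = 0) := by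
    intro v
    rw [Matrix.sub_mulVec, sub_eq_zero, Matrix.smul_mulVec, Matrix.one_mulVec]
    exact eq_comm
  constructor
  · rintro ⟨v, hv, hMv⟩
    have hd : (x • (1 : Matrix (Fin n) (Fin n) ℝ) - M).det = 0 :=
      Matrix.exists_mulVec_eq_zero_iff.mp ⟨v, hv, (h1 v).mp hMv⟩
    rw [Polynomial.IsRoot, eval_charpoly']
    exact hd
  · intro hr
    rw [Polynomial.IsRoot, eval_charpoly'] at hr
    obtain ⟨v, hv, h0⟩ := Matrix.exists_mulVec_eq_zero_iff.mpr hr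
    exact ⟨v, hv, (h1 v).mpr h0⟩

/-- The characteristic polynomial of the adjacency matrix of the tree `T_{2,3,10}` equals
`(λ^4 - 4λ^2 + 2)` times that of the tree `T_{2,4,5}`; in particular the two trees have
the same largest adjacency eigenvalue. -/
theorem charpoly_T2310_eq_T245 :
    (treeMatrix 1 2 9).charpoly =
      (X^4 - 4*X^2 + 2 : Polynomial ℝ) * (treeMatrix 1 3 4).charpoly ∧
    ∃ μ : ℝ,
      IsGreatest {x : ℝ | ∃ v : Fin (1 + 1 + 2 + 9) → ℝ, v ≠ 0 ∧
          (treeMatrix 1 2 9).mulVec v = x • v} μ ∧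
      IsGreatest {x : ℝ | ∃ v : Fin (1 + 1 + 3 + 4) → ℝ, v ≠ 0 ∧
          (treeMatrix 1 3 4).mulVec v = x • v} μ := by
  have cp1 : (treeMatrix 1 2 9).charpoly =
      X^13 - 12*X^11 + 54*X^9 - 113*X^7 + 111*X^5 - 46*X^3 + 6*X := by
    rw [charpoly_eq_myM' 1 2 9 13 (by norm_num), d13]
  have cp2 : (treeMatrix 1 3 4).charpoly = X^9 - 8*X^7 + 20*X^5 - 17*X^3 + 3*X := by
    rw [charpoly_eq_myM' 1 3 4 9 (by norm_num), e9]
  have part1 : (treeMatrix 1 2 9).charpoly =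
      (X^4 - 4*X^2 + 2 : Polynomial ℝ) * (treeMatrix 1 3 4).charpoly := by
    rw [cp1, cp2]; ring
  refine ⟨part1, ?_⟩
  set P : Polynomial ℝ := X^9 - 8*X^7 + 20*X^5 - 17*X^3 + 3*X with hP
  have hPe2 : P.eval 2 = -2 := by simp [hP]; norm_num
  have hPe3 : P.eval 3 = 6597 := by simp [hP]; norm_num
  have hPne : P ≠ 0 := by
    intro h
    rw [h] at hPe3
    simp at hPe3
  obtain ⟨ξ, hξI, hξ0⟩ : ∃ ξ ∈ Set.Icc (2:ℝ) 3, Polynomial.eval ξ P = 0 := by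
    have hc : ContinuousOn (fun y : ℝ => P.eval y) (Set.Icc 2 3) :=
      (Polynomial.continuous P).continuousOn
    have h := intermediate_value_Icc (by norm_num : (2:ℝ) ≤ 3) hc
    have h0 : (0:ℝ) ∈ Set.Icc (P.eval 2) (P.eval 3) := by
      rw [hPe2, hPe3]; constructor <;> norm_num
    obtain ⟨ξ, hm, he⟩ := h h0
    exact ⟨ξ, hm, he⟩
  have hne : (P.roots.toFinset).Nonempty :=
    ⟨ξ, Multiset.mem_toFinset.mpr (Polynomial.mem_roots'.mpr ⟨hPne, hξ0⟩)⟩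
  set μ := (P.roots.toFinset).max' hne with hμdef
  have hub : ∀ y : ℝ, P.IsRoot y → y ≤ μ := fun y hy =>
    Finset.le_max' _ y (Multiset.mem_toFinset.mpr (Polynomial.mem_roots'.mpr ⟨hPne, hy⟩))
  have hμroot : P.IsRoot μ :=
    (Polynomial.mem_roots'.mp (Multiset.mem_toFinset.mp
      (Finset.max'_mem _ hne))).2
  have hμ2 : (2:ℝ) ≤ μ := le_trans hξI.1 (hub ξ hξ0)
  refine ⟨μ, ⟨?_, ?_⟩, ⟨?_, ?_⟩⟩
  · -- μ is an eigenvalue of treeMatrix 1 2 9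
    refine (eig_iff _ μ).mpr ?_
    rw [Polynomial.IsRoot, part1, cp2, Polynomial.eval_mul]
    have h0 : P.eval μ = 0 := hμroot
    rw [h0, mul_zero]
  · -- upper bound for first tree
    rintro y hy
    have hr := (eig_iff _ y).mp hy
    rw [Polynomial.IsRoot, part1, cp2, Polynomial.eval_mul] at hr
    rcases mul_eq_zero.mp hr with hq | hp
    · simp only [Polynomial.eval_add, Polynomial.eval_sub, Polynomial.eval_pow,
        Polynomial.eval_mul, Polynomial.eval_ofNat, Polynomial.eval_X] at hq
      by_contra hlt
      push_neg at hlt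
      have hy2 : (2:ℝ) < y := lt_of_le_of_lt hμ2 hlt
      nlinarith only [hq, sq_nonneg y, sq_nonneg (y*y - 4), hy2]
    · exact hub y hp
  · -- μ eigenvalue of second tree
    refine (eig_iff _ μ).mpr ?_
    rw [Polynomial.IsRoot, cp2]
    exact hμroot
  · rintro y hy
    have hr := (eig_iff _ y).mp hy
    rw [Polynomial.IsRoot, cp2] at hr
    exact hub y hr
end
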